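/- arXiv:1610.06005 — 2 statements merged into one kernel-verified Lean document; each statement's English description precedes it below -/
import Mathlib

section
/- Let n ≥ 2, let P : [w_0, ∞) → ℝ^n be a proper n-system whose division numbers, enumerated in increasing order, are w_0 < w_1 < w_2 < ⋯, and let E be the set of limit points of the sequence (w_i^{-1} P(w_i))_{i≥1}. Then K(P) is the convex hull of E. -/
open Filter Set Pointwise Topology

noncomputable section

/-- Points of `ℝ^n`. -/
abbrev RVec (n : ℕ) := Fin n → ℝ

/-- The vector of `ℝ^n` with a `1` in position `j` (0-based) and `0` elsewhere;
`eVec n 0` is the first canonical basis vector `e_1`. -/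
def eVec (n : ℕ) (j : ℕ) : RVec n := fun i => if (i : ℕ) = j then 1 else 0

/-- `P` is an `n`-system on the subinterval `I` of `[0,∞)`:
`I` is an order-connected subset of `[0,∞)` with nonempty interior, and conditions
(S1), (S2), (S3) hold at every `q ∈ I`. -/
def IsNSystem (n : ℕ) (I : Set ℝ) (P : ℝ → RVec n) : Prop :=
  I ⊆ Set.Ici (0 : ℝ) ∧ I.OrdConnected ∧ (interior I).Nonempty ∧
  ∀ q ∈ I,
    ((∀ i, 0 ≤ P q i) ∧ Monotone (P q) ∧ (∑ i, P q i) = q) ∧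
    ∃ ε > (0 : ℝ), ∃ k ℓ : Fin n,
      (∀ t ∈ I ∩ Set.Icc (q - ε) q, P t = P q + (t - q) • eVec n ℓ) ∧
      (∀ t ∈ I ∩ Set.Icc q (q + ε), P t = P q + (t - q) • eVec n k) ∧
      (q ∈ interior I → ℓ < k → ∀ i : Fin n, ℓ ≤ i → i ≤ k → P q i = P q ℓ)

/-- `P` is a proper `n`-system on `I`: it is an `n`-system whose first component is
unbounded (by the monotonicity (S1) of the components, this is equivalent to all
components simultaneously exceeding any given bound). -/
def IsProperSys (n : ℕ) (I : Set ℝ) (P : ℝ → RVec n) : Prop :=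
  IsNSystem n I P ∧ ∀ M : ℝ, ∃ q ∈ I, ∀ i, M < P q i

/-- The set `F(P)` of limits of `q_i⁻¹ • P(q_i)` along strictly increasing unbounded
sequences `(q_i)` in `I`. -/
def FSet (n : ℕ) (I : Set ℝ) (P : ℝ → RVec n) : Set (RVec n) :=
  {x | ∃ q : ℕ → ℝ, (∀ i, q i ∈ I) ∧ StrictMono q ∧
    Tendsto q atTop atTop ∧ Tendsto (fun i => (q i)⁻¹ • P (q i)) atTop (𝓝 x)}

/-- The set `F(P, e₁)`: as `F(P)`, but with the extra requirement that the right
derivative of `P` at each `q_i` is the first basis vector `e_1`. -/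
def FSetE1 (n : ℕ) (I : Set ℝ) (P : ℝ → RVec n) : Set (RVec n) :=
  {x | ∃ q : ℕ → ℝ, (∀ i, q i ∈ I) ∧ StrictMono q ∧ Tendsto q atTop atTop ∧
    (∀ i, ∃ ε > (0 : ℝ), ∀ t ∈ I ∩ Set.Icc (q i) (q i + ε),
      P t = P (q i) + (t - q i) • eVec n 0) ∧
    Tendsto (fun i => (q i)⁻¹ • P (q i)) atTop (𝓝 x)}

/-- `q` is a switch number of the `n`-system `P` on `I`: a point of `I` on the boundary
of `I`, or an interior point where the local slopes `e_k` (right) and `e_ℓ` (left)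
from (S2) satisfy `k < ℓ`. -/
def IsSwitchNumber (n : ℕ) (I : Set ℝ) (P : ℝ → RVec n) (q : ℝ) : Prop :=
  q ∈ I ∧ (q ∈ frontier I ∨
    (q ∈ interior I ∧ ∃ ε > (0 : ℝ), ∃ k ℓ : Fin n, k < ℓ ∧
      (∀ t ∈ I ∩ Set.Icc (q - ε) q, P t = P q + (t - q) • eVec n ℓ) ∧
      (∀ t ∈ I ∩ Set.Icc q (q + ε), P t = P q + (t - q) • eVec n k)))

/-- `q` is a division number of the `n`-system `P` on `I`: a point of `I` on the boundary
of `I`, or an interior point where `P` is not differentiable, i.e. where the left and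
right slopes from (S2) differ. -/
def IsDivisionNumber (n : ℕ) (I : Set ℝ) (P : ℝ → RVec n) (q : ℝ) : Prop :=
  q ∈ I ∧ (q ∈ frontier I ∨
    (q ∈ interior I ∧ ∃ ε > (0 : ℝ), ∃ k ℓ : Fin n, k ≠ ℓ ∧
      (∀ t ∈ I ∩ Set.Icc (q - ε) q, P t = P q + (t - q) • eVec n ℓ) ∧
      (∀ t ∈ I ∩ Set.Icc q (q + ε), P t = P q + (t - q) • eVec n k)))

/-- A non-degenerate `n`-system: an `n`-system whose domain is a closed subinterval
of `(0,∞)` and whose switch points all have `n` distinct positive coordinates. -/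
def IsNonDegenerate (n : ℕ) (I : Set ℝ) (P : ℝ → RVec n) : Prop :=
  IsNSystem n I P ∧ IsClosed I ∧ I ⊆ Set.Ioi (0 : ℝ) ∧
  ∀ q, IsSwitchNumber n I P q → (∀ i, 0 < P q i) ∧ StrictMono (P q)

/-- A rigid `n`-system of mesh `δ`: a non-degenerate `n`-system whose switch points
belong to `δℤ^n`. -/
def IsRigid (n : ℕ) (δ : ℝ) (I : Set ℝ) (P : ℝ → RVec n) : Prop :=
  IsNonDegenerate n I P ∧
  ∀ q, IsSwitchNumber n I P q → ∀ i, ∃ m : ℤ, P q i = δ * m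

/-- A self-similar system: the domain is unbounded and there is `ρ > 1` with
`P(ρq) = ρ • P(q)` for all `q` in the domain. -/
def IsSelfSimilar (n : ℕ) (I : Set ℝ) (P : ℝ → RVec n) : Prop :=
  ¬ BddAbove I ∧ ∃ ρ : ℝ, 1 < ρ ∧ ∀ q ∈ I, ρ * q ∈ I ∧ P (ρ * q) = ρ • P q

/-- The cube `[-ε, ε]^n`. -/
def cubeNbhd (n : ℕ) (ε : ℝ) : Set (RVec n) := {y | ∀ i, |y i| ≤ ε}

/-- The distance `dist(E, F)`: the infimum of all `ε > 0` such that
`E ⊆ F + [-ε,ε]^n` and `F ⊆ E + [-ε,ε]^n`. -/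
def cubeDist (n : ℕ) (E F : Set (RVec n)) : ℝ :=
  sInf {ε : ℝ | 0 < ε ∧ E ⊆ F + cubeNbhd n ε ∧ F ⊆ E + cubeNbhd n ε}

/-- `μ_T(P)`: the point of `ℝ^m` whose `j`-th coordinate is
`liminf_{q → ∞, q ∈ I} T_j(P(q))/q`. -/
def muT (n m : ℕ) (T : RVec n → RVec m) (I : Set ℝ) (P : ℝ → RVec n) : RVec m :=
  fun j => Filter.liminf (fun q => T (P q) j / q) (atTop ⊓ 𝓟 I)

/-- `liminf` of a sequence of subsets of `ℝ^n`: the set of limits of convergent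
sequences `(x_i)` with `x_i ∈ F i` for every `i`. -/
def setLiminf (n : ℕ) (F : ℕ → Set (RVec n)) : Set (RVec n) :=
  {x | ∃ y : ℕ → RVec n, (∀ i, y i ∈ F i) ∧ Tendsto y atTop (𝓝 x)}

/-- `limsup` of a sequence of subsets of `ℝ^n`: the set of accumulation points of
sequences `(x_i)` with `x_i ∈ F i` for every `i`, i.e. limits of convergent
subsequences. -/
def setLimsup (n : ℕ) (F : ℕ → Set (RVec n)) : Set (RVec n) :=
  {x | ∃ (y : ℕ → RVec n) (φ : ℕ → ℕ), (∀ i, y i ∈ F i) ∧ StrictMono φ ∧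
    Tendsto (y ∘ φ) atTop (𝓝 x)}

/-!
Between two consecutive division numbers `w k < w (k + 1)` the system is affine with a single
slope `e_j` (a continuous induction: the slope can only change at a division number), so for
`q ∈ [w k, w (k + 1)]` the point `q⁻¹ P(q)` lies on the segment joining `(w k)⁻¹ P(w k)` and
`(w (k + 1))⁻¹ P(w (k + 1))`. These normalized points lie in the cube `[0,1]^n`, so along a
sequence `q_i → ∞` the segment coefficient and both endpoints converge along a subsequence, and
every point of `F(P)` is a convex combination of two cluster points of `(w_i⁻¹ P(w_i))`.
Conversely these cluster points lie in `F(P)` because `w_i → ∞`: a bounded increasing sequence of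
division numbers would converge to a point to the left of which `P` is affine.
-/

theorem inv_smul_mem_segment_of_mem_Icc {V : Type*} [AddCommGroup V] [Module ℝ V]
    {A B t : ℝ} (hA : 0 < A) (ht : t ∈ Icc A B) (x v : V) :
    t⁻¹ • (x + (t - A) • v) ∈ segment ℝ (A⁻¹ • x) (B⁻¹ • (x + (B - A) • v)) := by
  rcases ht.1.eq_or_lt with rfl | hAt
  · simpa using left_mem_segment ℝ _ _
  have ht0 : 0 < t := hA.trans hAt
  have hBA : 0 < B - A := by linarith [ht.2]
  refine ⟨A * (B - t) / (t * (B - A)), B * (t - A) / (t * (B - A)),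
    div_nonneg (mul_nonneg hA.le (sub_nonneg.2 ht.2)) (by positivity),
    div_nonneg (mul_nonneg (by linarith [ht.2]) (sub_nonneg.2 hAt.le)) (by positivity),
    by field_simp; ring, ?_⟩
  have hB : B ≠ 0 := by linarith [ht.2]
  match_scalars
  · field_simp
    ring
  · field_simp

section ClusterPoints

variable {V : Type*} [AddCommGroup V] [Module ℝ V] [TopologicalSpace V] [ContinuousAdd V]
  [ContinuousSMul ℝ V] [T2Space V] [FirstCountableTopology V]

theorem mem_convexHull_setOf_mapClusterPt {K : Set V} (hK : IsCompact K) {u : ℕ → V}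
    (hu : ∀ᶠ i in atTop, u i ∈ K) {k : ℕ → ℕ} (hk : Tendsto k atTop atTop) {y : ℕ → V} {x : V}
    (hy : ∀ᶠ i in atTop, y i ∈ segment ℝ (u (k i)) (u (k i + 1)))
    (hx : Tendsto y atTop (𝓝 x)) :
    x ∈ convexHull ℝ {z | MapClusterPt z atTop u} := by
  obtain ⟨θ, hθ⟩ := (hy.mono fun i hi => by rwa [segment_eq_image] at hi).choice
  have hk₁ : Tendsto (fun i => k i + 1) atTop atTop := (tendsto_add_atTop_nat 1).comp hk
  obtain ⟨⟨t, a, b⟩, ⟨ht, -⟩, ψ, hψ, hlim⟩ :=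
    (isCompact_Icc.prod (hK.prod hK)).tendsto_subseq'
      (x := fun i => (θ i, u (k i), u (k i + 1)))
      ((hθ.and ((hk.eventually hu).and (hk₁.eventually hu))).mono
        fun i hi => ⟨hi.1.1, hi.2.1, hi.2.2⟩).frequently
  have hψ' := hψ.tendsto_atTop
  have ha : MapClusterPt a atTop u :=
    ((((continuous_fst.comp continuous_snd).tendsto _).comp hlim).mapClusterPt).of_comp
      (hk.comp hψ')
  have hb : MapClusterPt b atTop u :=
    ((((continuous_snd.comp continuous_snd).tendsto _).comp hlim).mapClusterPt).of_comp
      (hk₁.comp hψ')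
  have hcomb : Continuous fun p : ℝ × V × V => (1 - p.1) • p.2.1 + p.1 • p.2.2 := by fun_prop
  have hxab : (1 - t) • a + t • b = x :=
    tendsto_nhds_unique ((hcomb.tendsto _).comp hlim |>.congr' <|
      hψ'.eventually (hθ.mono fun i hi => hi.2)) (hx.comp hψ')
  refine segment_subset_convexHull (s := {z | MapClusterPt z atTop u}) ha hb ?_
  rw [segment_eq_image]
  exact ⟨t, ht, hxab⟩

end ClusterPoints

theorem exists_strictMono_one_le_tendsto_of_mapClusterPt {X : Type*} [TopologicalSpace X]
    [FirstCountableTopology X] {u : ℕ → X} {x : X} (hx : MapClusterPt x atTop u) :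
    ∃ φ : ℕ → ℕ, StrictMono φ ∧ (∀ j, 1 ≤ φ j) ∧ Tendsto (u ∘ φ) atTop (𝓝 x) := by
  obtain ⟨ψ, hψ, hlim⟩ := hx.tendsto_subseq
  exact ⟨fun j => ψ (j + 1), hψ.comp (strictMono_id.add_const 1),
    fun j => (Nat.zero_le _).trans_lt (hψ j.lt_succ_self), hlim.comp (tendsto_add_atTop_nat 1)⟩

theorem Set.OrdConnected.Ioo_subset_interior {α : Type*} [TopologicalSpace α] [LinearOrder α]
    [OrderClosedTopology α] {s : Set α} (hs : s.OrdConnected) {a b : α} (ha : a ∈ s)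
    (hb : b ∈ s) : Ioo a b ⊆ interior s :=
  interior_maximal (Ioo_subset_Icc_self.trans (hs.out ha hb)) isOpen_Ioo

theorem eq_of_add_smul_eVec_eq {n : ℕ} {x y : RVec n} {s : ℝ} (hs : s ≠ 0) {i j : Fin n}
    (hi : y = x + s • eVec n i) (hj : y = x + s • eVec n j) : i = j := by
  have h := congrFun (smul_right_injective (RVec n) hs (add_left_cancel (hi.symm.trans hj))) i
  simpa [eVec, Fin.val_inj, eq_comm] using h

namespace IsNSystem

variable {n : ℕ} {I : Set ℝ} {P : ℝ → RVec n}

theorem inv_smul_mem_Icc (hP : IsNSystem n I P) {q : ℝ} (hq : q ∈ I) (hq0 : 0 < q) :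
    q⁻¹ • P q ∈ Icc (0 : RVec n) 1 := by
  obtain ⟨hnonneg, -, hsum⟩ := (hP.2.2.2 q hq).1
  refine ⟨fun i => by simpa using mul_nonneg (inv_nonneg.2 hq0.le) (hnonneg i), fun i => ?_⟩
  have : P q i ≤ q :=
    (Finset.single_le_sum (fun j _ => hnonneg j) (Finset.mem_univ i)).trans_eq hsum
  simpa [← div_eq_inv_mul, div_le_one hq0] using this

theorem continuousOn (hP : IsNSystem n I P) : ContinuousOn P I := by
  intro q hq
  obtain ⟨ε, hε, k, ℓ, hleft, hright, -⟩ := (hP.2.2.2 q hq).2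
  have hball : Ioo (q - ε) (q + ε) ∈ 𝓝 q := Ioo_mem_nhds (by linarith) (by linarith)
  have haff : ∀ v : RVec n, ContinuousWithinAt (fun t => P q + (t - q) • v) I q := fun v =>
    (by fun_prop : Continuous fun t : ℝ => P q + (t - q) • v).continuousWithinAt
  rw [← inter_univ I, ← Iic_union_Ici (a := q), inter_union_distrib_left,
    continuousWithinAt_union]
  constructor
  · refine ((haff (eVec n ℓ)).mono inter_subset_left).congr_of_eventuallyEq ?_ (by simp)
    filter_upwards [inter_mem_nhdsWithin _ hball] with t ⟨⟨htI, htq⟩, ht⟩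
    exact hleft t ⟨htI, ht.1.le, htq⟩
  · refine ((haff (eVec n k)).mono inter_subset_left).congr_of_eventuallyEq ?_ (by simp)
    filter_upwards [inter_mem_nhdsWithin _ hball] with t ⟨⟨htI, htq⟩, ht⟩
    exact hright t ⟨htI, htq, ht.2.le⟩

theorem exists_affine_nhds_of_not_isDivisionNumber (hP : IsNSystem n I P) {t : ℝ}
    (ht : t ∈ interior I) (hnd : ¬ IsDivisionNumber n I P t) :
    ∃ ε > 0, ∃ k : Fin n, ∀ u ∈ I ∩ Icc (t - ε) (t + ε), P u = P t + (u - t) • eVec n k := by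
  obtain ⟨ε, hε, k, ℓ, hleft, hright, -⟩ := (hP.2.2.2 t (interior_subset ht)).2
  obtain rfl : k = ℓ := by
    by_contra hkℓ
    exact hnd ⟨interior_subset ht, .inr ⟨ht, ε, hε, k, ℓ, hkℓ, hleft, hright⟩⟩
  refine ⟨ε, hε, k, fun u ⟨huI, hu⟩ => ?_⟩
  rcases le_total u t with hut | htu
  · exact hleft u ⟨huI, hu.1, hut⟩
  · exact hright u ⟨huI, htu, hu.2⟩

theorem not_isDivisionNumber_of_affine (hP : IsNSystem n I P) {c d t : ℝ} (hc : c ∈ I)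
    (hd : d ∈ I) (ht : t ∈ Ioo c d) {j : Fin n}
    (haff : ∀ u ∈ Icc c d, P u = P t + (u - t) • eVec n j) :
    ¬ IsDivisionNumber n I P t := by
  rintro ⟨-, hfr | ⟨-, ε, hε, k, ℓ, hkℓ, hleft, hright⟩⟩
  · exact hfr.2 (hP.2.1.Ioo_subset_interior hc hd ht)
  have hcd : Icc c d ⊆ I := hP.2.1.out hc hd
  set u₁ := max c (t - ε)
  set u₂ := min d (t + ε)
  have hu₁ : u₁ ∈ Icc c d := ⟨le_max_left _ _, max_le (ht.1.trans ht.2).le (by linarith [ht.2])⟩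
  have hu₂ : u₂ ∈ Icc c d := ⟨le_min (ht.1.trans ht.2).le (by linarith [ht.1]), min_le_left _ _⟩
  have hℓ : ℓ = j := eq_of_add_smul_eVec_eq (sub_ne_zero.2 (max_lt ht.1 (by linarith)).ne)
    (hleft u₁ ⟨hcd hu₁, le_max_right _ _, (max_lt ht.1 (by linarith)).le⟩) (haff u₁ hu₁)
  have hk : k = j := eq_of_add_smul_eVec_eq (sub_ne_zero.2 (lt_min ht.2 (by linarith)).ne')
    (hright u₂ ⟨hcd hu₂, (lt_min ht.2 (by linarith)).le, min_le_right _ _⟩) (haff u₂ hu₂)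
  exact hkℓ (hk.trans hℓ.symm)

theorem exists_affine_of_forall_not_isDivisionNumber (hP : IsNSystem n I P) {a b : ℝ}
    (ha : a ∈ I) (hb : b ∈ I) (hnd : ∀ t ∈ Ioo a b, ¬ IsDivisionNumber n I P t) :
    ∃ j : Fin n, ∀ t ∈ Icc a b, P t = P a + (t - a) • eVec n j := by
  obtain ⟨ε₀, hε₀, j, -, -, hright, -⟩ := (hP.2.2.2 a ha).2
  have hab : Icc a b ⊆ I := hP.2.1.out ha hb
  let f : ℝ → RVec n := fun t => P t - (t - a) • eVec n j
  have hclosed : IsClosed (Icc a b ∩ f ⁻¹' {P a}) :=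
    ((hP.continuousOn.mono hab).sub (by fun_prop)).preimage_isClosed_of_isClosed isClosed_Icc
      isClosed_singleton
  suffices hsub : Icc a b ⊆ f ⁻¹' {P a} from ⟨j, fun t ht => eq_add_of_sub_eq (hsub ht)⟩
  refine (inter_comm _ _ ▸ hclosed).Icc_subset_of_forall_mem_nhdsGT_of_Icc_subset (by simp [f])
    fun t ⟨hat, htb⟩ hsub => ?_
  have hPt : P t = P a + (t - a) • eVec n j := eq_add_of_sub_eq (hsub ⟨hat, le_rfl⟩)
  obtain ⟨ε, hε, hslope⟩ : ∃ ε > 0, ∀ u ∈ I ∩ Icc t (t + ε), P u = P t + (u - t) • eVec n j := by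
    rcases hat.eq_or_lt with rfl | hat
    · exact ⟨ε₀, hε₀, hright⟩
    obtain ⟨ε, hε, k, hk⟩ := hP.exists_affine_nhds_of_not_isDivisionNumber
      (hP.2.1.Ioo_subset_interior ha hb ⟨hat, htb⟩) (hnd t ⟨hat, htb⟩)
    set u₀ := max a (t - ε)
    have hu₀ : u₀ < t := max_lt hat (by linarith)
    have hj : P u₀ = P t + (u₀ - t) • eVec n j := by
      rw [eq_add_of_sub_eq (hsub ⟨le_max_left _ _, hu₀.le⟩), hPt]
      module
    obtain rfl : k = j := eq_of_add_smul_eVec_eq (sub_ne_zero.2 hu₀.ne)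
      (hk u₀ ⟨hab ⟨le_max_left _ _, hu₀.le.trans htb.le⟩, le_max_right _ _, by linarith⟩) hj
    exact ⟨ε, hε, fun u ⟨huI, hu⟩ => hk u ⟨huI, by linarith [hu.1], hu.2⟩⟩
  filter_upwards [Ioo_mem_nhdsGT (lt_min (by linarith) htb : t < min (t + ε) b)] with u hu
  have hu' : u ∈ Icc t (t + ε) := ⟨hu.1.le, hu.2.le.trans (min_le_left _ _)⟩
  show P u - (u - a) • eVec n j = P a
  rw [hslope u ⟨hab ⟨hat.trans hu'.1, hu.2.le.trans (min_le_right _ _)⟩, hu'⟩, hPt]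
  module

theorem tendsto_atTop_of_isDivisionNumber (hP : IsNSystem n I P) (hI : IsClosed I)
    {w : ℕ → ℝ} (hw : StrictMono w) (hdiv : ∀ i, IsDivisionNumber n I P (w i)) :
    Tendsto w atTop atTop := by
  by_contra hunb
  have hbdd : BddAbove (range w) := by
    simp only [tendsto_atTop_atTop_iff_of_monotone hw.monotone, not_forall, not_exists,
      not_le] at hunb
    obtain ⟨B, hB⟩ := hunb
    exact ⟨B, forall_mem_range.2 fun i => (hB i).le⟩
  set L := ⨆ i, w i
  have hL : Tendsto w atTop (𝓝 L) := tendsto_atTop_ciSup hw.monotone hbdd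
  have hwL : ∀ i, w i < L := fun i => (hw i.lt_succ_self).trans_le (le_ciSup hbdd _)
  have hLI : L ∈ I := hI.mem_of_tendsto hL (.of_forall fun i => (hdiv i).1)
  obtain ⟨ε, hε, -, ℓ, hleft, -, -⟩ := (hP.2.2.2 L hLI).2
  obtain ⟨i, hi⟩ := (hL.eventually (Ioi_mem_nhds (by linarith : L - ε < L))).exists
  have hIcc : Icc (w i) L ⊆ I ∩ Icc (L - ε) L := fun u hu =>
    ⟨hP.2.1.out (hdiv i).1 hLI hu, (le_of_lt hi).trans hu.1, hu.2⟩
  refine hP.not_isDivisionNumber_of_affine (j := ℓ) (hdiv i).1 hLI ⟨hw i.lt_succ_self, hwL _⟩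
    (fun u hu => ?_) (hdiv (i + 1))
  rw [hleft u (hIcc hu), hleft _ (hIcc ⟨(hw i.lt_succ_self).le, (hwL _).le⟩)]
  module

theorem fSet_subset_convexHull (hP : IsNSystem n I P) {w : ℕ → ℝ} (hw : StrictMono w)
    (hwtop : Tendsto w atTop atTop) (hwI : ∀ i, w i ∈ I)
    (hnd : ∀ i, ∀ t ∈ Ioo (w i) (w (i + 1)), ¬ IsDivisionNumber n I P t) :
    FSet n I P ⊆ convexHull ℝ {z | MapClusterPt z atTop fun i => (w i)⁻¹ • P (w i)} := by
  rintro x ⟨q, -, -, hq, hx⟩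
  obtain ⟨k, hk⟩ : ∃ k : ℕ → ℕ, ∀ᶠ i in atTop, w (k i) < q i ∧ q i ≤ w (k i + 1) :=
    ((hq.eventually_gt_atTop (w 0)).mono fun i hi =>
      hw.exists_between_of_tendsto_atTop hwtop hi).choice
  have hktop : Tendsto k atTop atTop := tendsto_atTop.2 fun b =>
    (hk.and (hq.eventually_ge_atTop (w (b + 1)))).mono fun i ⟨⟨_, hqk⟩, hbq⟩ =>
      Nat.succ_le_succ_iff.1 (hw.le_iff_le.1 (hbq.trans hqk))
  refine mem_convexHull_setOf_mapClusterPt (isCompact_Icc (a := 0) (b := 1))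
    ((hwtop.eventually_gt_atTop 0).mono fun i hi => hP.inv_smul_mem_Icc (hwI i) hi) hktop ?_ hx
  filter_upwards [hk, hktop.eventually (hwtop.eventually_gt_atTop 0)] with i ⟨hkq, hqk⟩ hpos
  obtain ⟨j, hj⟩ := hP.exists_affine_of_forall_not_isDivisionNumber (hwI _) (hwI _) (hnd (k i))
  rw [hj _ ⟨hkq.le, hqk⟩, hj _ ⟨(hw (k i).lt_succ_self).le, le_rfl⟩]
  exact inv_smul_mem_segment_of_mem_Icc hpos ⟨hkq.le, hqk⟩ _ _

end IsNSystem

theorem hull_eq_hull_of_division_limits_general (n : ℕ) (w₀ : ℝ)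
    (P : ℝ → RVec n) (hP : IsProperSys n (Set.Ici w₀) P)
    (w : ℕ → ℝ) (hmono : StrictMono w)
    (hdiv : ∀ i, IsDivisionNumber n (Set.Ici w₀) P (w i))
    (hall : ∀ q, IsDivisionNumber n (Set.Ici w₀) P q → ∃ i, q = w i) :
    convexHull ℝ (FSet n (Set.Ici w₀) P) =
      convexHull ℝ {x : RVec n | ∃ φ : ℕ → ℕ, StrictMono φ ∧ (∀ j, 1 ≤ φ j) ∧
        Filter.Tendsto (fun j => (w (φ j))⁻¹ • P (w (φ j))) Filter.atTop (nhds x)} := by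
  have hwtop : Tendsto w atTop atTop :=
    hP.1.tendsto_atTop_of_isDivisionNumber isClosed_Ici hmono hdiv
  have hnd : ∀ i, ∀ t ∈ Ioo (w i) (w (i + 1)), ¬ IsDivisionNumber n (Ici w₀) P t := by
    rintro i t ⟨hit, hti⟩ ht
    obtain ⟨m, rfl⟩ := hall t ht
    have := hmono.lt_iff_lt.1 hit
    have := hmono.lt_iff_lt.1 hti
    omega
  refine (convexHull_min ?_ (convex_convexHull ℝ _)).antisymm (convexHull_mono ?_)
  · exact (hP.1.fSet_subset_convexHull hmono hwtop (fun i => (hdiv i).1) hnd).trans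
      (convexHull_mono fun z hz => exists_strictMono_one_le_tendsto_of_mapClusterPt hz)
  · rintro x ⟨φ, hφ, -, hx⟩
    exact ⟨w ∘ φ, fun j => (hdiv _).1, hmono.comp hφ, hwtop.comp hφ.tendsto_atTop, hx⟩

/-- **Proposition (convex hull via division points).** Let `P` be a proper `n`-system
on `[w₀, ∞)` with division numbers `w₀ = w(0) < w(1) < w(2) < ⋯`, and let `E` be the
set of limit points of the sequence `(w_i⁻¹ • P(w_i))_{i≥1}`.  Then `K(P)`, the convex
hull of `F(P)`, equals the convex hull of `E`. -/
theorem hull_eq_hull_of_division_limits (n : ℕ) (hn : 2 ≤ n) (w₀ : ℝ)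
    (P : ℝ → RVec n) (hP : IsProperSys n (Set.Ici w₀) P)
    (w : ℕ → ℝ) (hw0 : w 0 = w₀) (hmono : StrictMono w)
    (hdiv : ∀ i, IsDivisionNumber n (Set.Ici w₀) P (w i))
    (hall : ∀ q, IsDivisionNumber n (Set.Ici w₀) P q → ∃ i, q = w i) :
    convexHull ℝ (FSet n (Set.Ici w₀) P) =
      convexHull ℝ {x : RVec n | ∃ φ : ℕ → ℕ, StrictMono φ ∧ (∀ j, 1 ≤ φ j) ∧
        Filter.Tendsto (fun j => (w (φ j))⁻¹ • P (w (φ j))) Filter.atTop (nhds x)} :=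
  hull_eq_hull_of_division_limits_general n w₀ P hP w hmono hdiv hall
end
end

section
/- Let n ≥ 2, let δ > 0, let R = (R_1, …, R_n) : [u, v] → Δ_n be a rigid n-system of mesh δ on a compact subinterval [u, v] of (0,∞), and let b ≥ 0 be a multiple of δ. Then the map P : [u + nb, v + nb] → Δ_n given by P(q) = (b + R_1(q − nb), …, b + R_n(q − nb)) is also a rigid n-system of mesh δ, and for each q ∈ [u, v] one has ‖(q + nb)^{-1}P(q + nb) − q^{-1}R(q)‖_∞ ≤ (n + 1)b/(u + nb). -/
open Filter Set Pointwise Topology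

noncomputable section

/-! Shifting the domain by `nb` and adding `b` to every coordinate keeps the coordinate sum
equal to the parameter, and it transports the local picture at `q - nb` to the one at `q` with
the same slopes, so (S1)–(S3), non-degeneracy and the switch numbers all carry over; switch
points move by `(b, …, b) ∈ δℤ^n`. The estimate is coordinatewise:
`(b + r)/(q + nb) - r/q = (qb - nbr)/(q(q + nb))` with `0 ≤ r ≤ q`. -/

theorem abs_add_div_add_sub_div_le {b c q r : ℝ} (hb : 0 ≤ b) (hc : 0 ≤ c) (hq : 0 < q)
    (hr : 0 ≤ r) (hrq : r ≤ q) : |(b + r) / (q + c) - r / q| ≤ (b + c) / (q + c) := by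
  have hqc : 0 < q + c := by linarith
  have hdiff : (b + r) / (q + c) - r / q = (q * b - c * r) / ((q + c) * q) := by
    field_simp
    ring
  calc |(b + r) / (q + c) - r / q| = |q * b - c * r| / ((q + c) * q) := by
        rw [hdiff, abs_div, abs_of_pos (mul_pos hqc hq)]
    _ ≤ (b + c) * q / ((q + c) * q) := by
        gcongr
        exact abs_le.2 ⟨by nlinarith [mul_nonneg (sub_nonneg.2 hrq) hc, mul_nonneg hq.le hb],
          by nlinarith [mul_nonneg hr hc, mul_nonneg hq.le hc]⟩
    _ = (b + c) / (q + c) := mul_div_mul_right _ _ hq.ne'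

theorem norm_smul_const_add_sub_smul_le {n : ℕ} {x : RVec n} {q b : ℝ} (hq : 0 < q) (hb : 0 ≤ b)
    (hx : ∀ i, 0 ≤ x i) (hxq : ∀ i, x i ≤ q) :
    ‖(q + n * b)⁻¹ • (fun i => b + x i : RVec n) - q⁻¹ • x‖ ≤ (n + 1) * b / (q + n * b) := by
  have hc : 0 ≤ (n : ℝ) * b := by positivity
  refine (pi_norm_le_iff_of_nonneg (by positivity)).2 fun i => ?_
  rw [Real.norm_eq_abs, add_one_mul, add_comm _ b]
  simpa only [Pi.sub_apply, Pi.smul_apply, smul_eq_mul, inv_mul_eq_div] using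
    abs_add_div_add_sub_div_le hb hc hq (hx i) (hxq i)

namespace IsNSystem

variable {n : ℕ} {I : Set ℝ} {P : ℝ → RVec n} {q : ℝ}

theorem apply_nonneg (hP : IsNSystem n I P) (hq : q ∈ I) (i : Fin n) : 0 ≤ P q i :=
  (hP.2.2.2 q hq).1.1 i

theorem apply_le (hP : IsNSystem n I P) (hq : q ∈ I) (i : Fin n) : P q i ≤ q :=
  calc P q i ≤ ∑ j, P q j :=
        Finset.single_le_sum (fun j _ => hP.apply_nonneg hq j) (Finset.mem_univ i)
    _ = q := (hP.2.2.2 q hq).1.2.2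

end IsNSystem

theorem interior_preimage_sub_const (I : Set ℝ) (c : ℝ) :
    interior ((· - c) ⁻¹' I) = (· - c) ⁻¹' interior I :=
  ((Homeomorph.subRight c).preimage_interior I).symm

theorem frontier_preimage_sub_const (I : Set ℝ) (c : ℝ) :
    frontier ((· - c) ⁻¹' I) = (· - c) ⁻¹' frontier I :=
  ((Homeomorph.subRight c).preimage_frontier I).symm

theorem preimage_sub_const_inter_Icc_left (I : Set ℝ) (c q ε : ℝ) :
    (· - c) ⁻¹' I ∩ Icc (q - ε) q = (· - c) ⁻¹' (I ∩ Icc (q - c - ε) (q - c)) := by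
  rw [preimage_inter, preimage_sub_const_Icc, sub_right_comm, sub_add_cancel, sub_add_cancel]

theorem preimage_sub_const_inter_Icc_right (I : Set ℝ) (c q ε : ℝ) :
    (· - c) ⁻¹' I ∩ Icc q (q + ε) = (· - c) ⁻¹' (I ∩ Icc (q - c) (q - c + ε)) := by
  rw [preimage_inter, preimage_sub_const_Icc, sub_add_cancel, sub_add_eq_add_sub, sub_add_cancel]

section translateSystem

variable {n : ℕ} {I : Set ℝ} {R : ℝ → RVec n} {b δ : ℝ}

def translateSystem (b : ℝ) (R : ℝ → RVec n) : ℝ → RVec n :=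
  fun q i => b + R (q - n * b) i

theorem forall_translateSystem_slope_iff {J : Set ℝ} {q : ℝ} {k : Fin n} :
    (∀ t ∈ (· - n * b) ⁻¹' J,
      translateSystem b R t = translateSystem b R q + (t - q) • eVec n k) ↔
    ∀ s ∈ J, R s = R (q - n * b) + (s - (q - n * b)) • eVec n k := by
  constructor
  · intro h s hs
    ext i
    have := congrFun (h (s + n * b) (by simpa using hs)) i
    simp only [translateSystem, add_sub_cancel_right, Pi.add_apply, Pi.smul_apply,
      smul_eq_mul] at this ⊢
    linarith
  · intro h t ht
    ext i
    have := congrFun (h (t - n * b) ht) i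
    simp only [translateSystem, Pi.add_apply, Pi.smul_apply, smul_eq_mul] at this ⊢
    linarith

theorem IsNSystem.translateSystem (hR : IsNSystem n I R) (hb : 0 ≤ b) :
    IsNSystem n ((· - n * b) ⁻¹' I) (translateSystem b R) := by
  obtain ⟨hI₀, hIconn, ⟨p, hp⟩, hS⟩ := hR
  refine ⟨fun q hq => ?_, hIconn.preimage_mono fun _ _ h => sub_le_sub_right h _, ?_,
    fun q hq => ?_⟩
  · have : 0 ≤ q - n * b := hI₀ hq
    exact mem_Ici.2 (by linarith [mul_nonneg n.cast_nonneg hb])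
  · exact ⟨p + n * b, by simpa [interior_preimage_sub_const] using hp⟩
  obtain ⟨⟨hpos, hmono, hsum⟩, ε, hε, k, ℓ, hleft, hright, hS3⟩ := hS _ hq
  refine ⟨⟨fun i => add_nonneg hb (hpos i), fun i j hij => add_le_add_right (hmono hij) b, ?_⟩,
    ε, hε, k, ℓ, ?_, ?_, ?_⟩
  · simp only [_root_.translateSystem, Finset.sum_add_distrib, hsum, Finset.sum_const,
      Finset.card_univ, Fintype.card_fin, nsmul_eq_mul]
    ring
  · rwa [preimage_sub_const_inter_Icc_left, forall_translateSystem_slope_iff]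
  · rwa [preimage_sub_const_inter_Icc_right, forall_translateSystem_slope_iff]
  · rw [interior_preimage_sub_const]
    intro hq' hℓk i hℓi hik
    simp only [_root_.translateSystem, hS3 hq' hℓk i hℓi hik]

theorem isSwitchNumber_translateSystem_iff {q : ℝ} :
    IsSwitchNumber n ((· - n * b) ⁻¹' I) (translateSystem b R) q ↔
      IsSwitchNumber n I R (q - n * b) := by
  simp only [IsSwitchNumber, interior_preimage_sub_const, frontier_preimage_sub_const,
    preimage_sub_const_inter_Icc_left, preimage_sub_const_inter_Icc_right,
    forall_translateSystem_slope_iff]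
  exact Iff.rfl

theorem IsNonDegenerate.translateSystem (hR : IsNonDegenerate n I R) (hb : 0 ≤ b) :
    IsNonDegenerate n ((· - n * b) ⁻¹' I) (translateSystem b R) := by
  obtain ⟨hsys, hclosed, hI₀, hsw⟩ := hR
  refine ⟨hsys.translateSystem hb, hclosed.preimage (continuous_sub_right _),
    fun q hq => ?_, fun q hq => ?_⟩
  · have : 0 < q - n * b := hI₀ hq
    exact mem_Ioi.2 (by linarith [mul_nonneg n.cast_nonneg hb])
  · obtain ⟨hpos, hmono⟩ := hsw _ (isSwitchNumber_translateSystem_iff.1 hq)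
    exact ⟨fun i => add_pos_of_nonneg_of_pos hb (hpos i),
      fun i j hij => add_lt_add_right (hmono hij) b⟩

theorem IsRigid.translateSystem (hR : IsRigid n δ I R) (hb : 0 ≤ b)
    (hbδ : ∃ m : ℤ, b = δ * m) :
    IsRigid n δ ((· - n * b) ⁻¹' I) (translateSystem b R) := by
  obtain ⟨m, rfl⟩ := hbδ
  refine ⟨hR.1.translateSystem hb, fun q hq i => ?_⟩
  obtain ⟨k, hk⟩ := hR.2 _ (isSwitchNumber_translateSystem_iff.1 hq) i
  exact ⟨m + k, by rw [_root_.translateSystem, hk]; push_cast; ring⟩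

end translateSystem

theorem translate_rigid_system_general (n : ℕ) (δ : ℝ)
    (u v : ℝ) (hu : 0 < u)
    (R : ℝ → RVec n) (hR : IsRigid n δ (Set.Icc u v) R)
    (b : ℝ) (hb : 0 ≤ b) (hbδ : ∃ m : ℤ, b = δ * m) :
    IsRigid n δ (Set.Icc (u + n * b) (v + n * b))
      (fun q => (fun i => b + R (q - n * b) i : RVec n)) ∧
    ∀ q ∈ Set.Icc u v,
      ‖(q + n * b)⁻¹ • (fun i => b + R q i : RVec n) - q⁻¹ • R q‖
        ≤ (n + 1) * b / (u + n * b) := by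
  refine ⟨?_, fun q hq => ?_⟩
  · have := hR.translateSystem hb hbδ
    rwa [preimage_sub_const_Icc] at this
  have hsys := hR.1.1
  calc _ ≤ (n + 1) * b / (q + n * b) :=
        norm_smul_const_add_sub_smul_le (hu.trans_le hq.1) hb (hsys.apply_nonneg hq)
          (hsys.apply_le hq)
    _ ≤ (n + 1) * b / (u + n * b) := by gcongr; exact hq.1

/-- **Lemma (translation of a rigid system).** Let `R` be a rigid `n`-system of mesh
`δ` on a compact subinterval `[u,v]` of `(0,∞)` and let `b ≥ 0` be a multiple of `δ`.
Then `P(q) = (b + R₁(q - nb), …, b + R_n(q - nb))` is a rigid `n`-system of mesh `δ` on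
`[u + nb, v + nb]`, and `‖(q+nb)⁻¹P(q+nb) - q⁻¹R(q)‖_∞ ≤ (n+1)b/(u+nb)` for
`q ∈ [u,v]`. -/
theorem translate_rigid_system (n : ℕ) (hn : 2 ≤ n) (δ : ℝ) (hδ : 0 < δ)
    (u v : ℝ) (hu : 0 < u) (huv : u < v)
    (R : ℝ → RVec n) (hR : IsRigid n δ (Set.Icc u v) R)
    (b : ℝ) (hb : 0 ≤ b) (hbδ : ∃ m : ℤ, b = δ * m) :
    IsRigid n δ (Set.Icc (u + n * b) (v + n * b))
      (fun q => (fun i => b + R (q - n * b) i : RVec n)) ∧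
    ∀ q ∈ Set.Icc u v,
      ‖(q + n * b)⁻¹ • (fun i => b + R q i : RVec n) - q⁻¹ • R q‖
        ≤ (n + 1) * b / (u + n * b) :=
  translate_rigid_system_general n δ u v hu R hR b hb hbδ
end
end
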